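/- If k₁+k₂+k₃+k₄ = 0, then the quartic-vertex cochain can be written as a sum of products of star vertices: −v₄ = ((k₁−k₂)·(k₃−k₄))(ξ₁·ξ₂)(ξ₃·ξ₄) + ((k₃−k₁)·(k₂−k₄))(ξ₃·ξ₁)(ξ₂·ξ₄) + ((k₁−k₄)·(k₂−k₃))(ξ₁·ξ₄)(ξ₂·ξ₃). -/

import Mathlib

/-! Under momentum conservation each star coefficient is a difference of two Mandelstam
invariants: `(k₁ - k₂)·(k₃ - k₄) = (k₁ + k₃)² - (k₂ + k₃)²`, since `k₃ - k₄ = k₁ + k₂ + 2k₃`.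
Substituting these three differences into the star sum and regrouping by Mandelstam
invariant gives `-v₄` term by term. -/

namespace Stmt7

variable {V : Type*} [AddCommGroup V] [Module ℝ V]

def v₄ (B : LinearMap.BilinForm ℝ V) (m₁ m₂ m₃ m₄ : V × V) : ℝ :=
  B (m₁.2 + m₂.2) (m₁.2 + m₂.2)
      * (B m₁.1 m₃.1 * B m₂.1 m₄.1 - B m₂.1 m₃.1 * B m₁.1 m₄.1)
    + B (m₂.2 + m₃.2) (m₂.2 + m₃.2)
      * (B m₂.1 m₁.1 * B m₃.1 m₄.1 - B m₃.1 m₁.1 * B m₂.1 m₄.1)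
    + B (m₁.2 + m₃.2) (m₁.2 + m₃.2)
      * (B m₁.1 m₄.1 * B m₃.1 m₂.1 - B m₃.1 m₄.1 * B m₁.1 m₂.1)

end Stmt7

namespace LinearMap.BilinForm.IsSymm

theorem apply_sub_sub_eq_of_add_eq_zero {R M : Type*} [CommRing R] [AddCommGroup M]
    [Module R M] {B : LinearMap.BilinForm R M} (hB : B.IsSymm) {a b c d : M}
    (h : a + b + c + d = 0) :
    B (a - b) (c - d) = B (a + c) (a + c) - B (b + c) (b + c) := by
  obtain rfl : d = -(a + b + c) := eq_neg_of_add_eq_zero_right h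
  simp only [map_add, map_sub, map_neg, LinearMap.add_apply, LinearMap.sub_apply]
  rw [hB.eq b a, hB.eq c a, hB.eq c b]
  ring

end LinearMap.BilinForm.IsSymm

namespace Stmt7

variable {V : Type*} [AddCommGroup V] [Module ℝ V]

/-- If `k₁+k₂+k₃+k₄ = 0` then
`−v₄ = ((k₁−k₂)·(k₃−k₄))(ξ₁·ξ₂)(ξ₃·ξ₄) + ((k₃−k₁)·(k₂−k₄))(ξ₃·ξ₁)(ξ₂·ξ₄)
  + ((k₁−k₄)·(k₂−k₃))(ξ₁·ξ₄)(ξ₂·ξ₃)`. -/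
theorem v₄_star_identity (B : LinearMap.BilinForm ℝ V) (hB : B.IsSymm)
    (ξ₁ k₁ ξ₂ k₂ ξ₃ k₃ ξ₄ k₄ : V) (h : k₁ + k₂ + k₃ + k₄ = 0) :
    -v₄ B (ξ₁, k₁) (ξ₂, k₂) (ξ₃, k₃) (ξ₄, k₄)
      = B (k₁ - k₂) (k₃ - k₄) * (B ξ₁ ξ₂ * B ξ₃ ξ₄)
        + B (k₃ - k₁) (k₂ - k₄) * (B ξ₃ ξ₁ * B ξ₂ ξ₄)
        + B (k₁ - k₄) (k₂ - k₃) * (B ξ₁ ξ₄ * B ξ₂ ξ₃) := by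
  have hs : B (k₁ - k₂) (k₃ - k₄) = B (k₁ + k₃) (k₁ + k₃) - B (k₂ + k₃) (k₂ + k₃) :=
    hB.apply_sub_sub_eq_of_add_eq_zero h
  have ht : B (k₃ - k₁) (k₂ - k₄) = B (k₂ + k₃) (k₂ + k₃) - B (k₁ + k₂) (k₁ + k₂) := by
    rw [hB.apply_sub_sub_eq_of_add_eq_zero (by rw [← h]; abel), add_comm k₃, add_comm k₁]
  have hu : B (k₁ - k₄) (k₂ - k₃) = B (k₁ + k₂) (k₁ + k₂) - B (k₁ + k₃) (k₁ + k₃) := by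
    rw [hB.eq, hB.apply_sub_sub_eq_of_add_eq_zero (by rw [← h]; abel), add_comm k₂,
      add_comm k₃]
  dsimp only [v₄]
  rw [hs, ht, hu, hB.eq ξ₁ ξ₃, hB.eq ξ₂ ξ₁, hB.eq ξ₃ ξ₂]
  ring

end Stmt7
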